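/- There exists a constant c > 0 depending only on the dimension d such that for every α ∈ (0,2), every h > 0, and every ξ ∈ D_h = [−π/h, π/h]^d, one has |M_h(ξ)^{α/2} − |ξ|^α| ≤ c h² |ξ|^{α+2}. -/

import Mathlib

open MeasureTheory Real

noncomputable section

abbrev Ed (d : ℕ) := EuclideanSpace ℝ (Fin d)

/-- The Fourier symbol of the discrete Laplacian:
`M_h(ξ) = Σ_{p=1}^d (4/h²) sin²(ξ_p h/2)`. -/
def Mh {d : ℕ} (h : ℝ) (ξ : Ed d) : ℝ :=
  ∑ p : Fin d, (4 / h ^ 2) * Real.sin (ξ p * h / 2) ^ 2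

/-!
Since `(4/h²) sin²(x h/2)` differs from `x²` by at most `h² x⁴/12` (Taylor), summing over the
coordinates gives `‖ξ‖² - h²‖ξ‖⁴/12 ≤ M_h(ξ) ≤ ‖ξ‖²`. For `0 < s ≤ 1` and `0 ≤ a ≤ b` one has
`b^s - a^s ≤ b^(s-1) (b - a)`, because `(a/b)^s ≥ a/b`; with `a = M_h(ξ)`, `b = ‖ξ‖²`, `s = α/2`
this yields the bound with `c = 1/12`.
-/

lemma sq_sub_pow_four_div_three_le_sin_sq (t : ℝ) : t ^ 2 - t ^ 4 / 3 ≤ sin t ^ 2 := by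
  rcases le_or_gt (t ^ 2) 3 with ht | ht
  · have hsin : |t| - |t| ^ 3 / 6 ≤ |sin t| := by
      linarith [abs_sub_sin_le t, abs_sub_abs_le_abs_sub t (sin t)]
    have hpos : 0 ≤ |t| - |t| ^ 3 / 6 := by
      nlinarith [sq_abs t, abs_nonneg t]
    have hsq := pow_le_pow_left₀ hpos hsin 2
    rw [sq_abs] at hsq
    nlinarith [sq_abs t, sq_nonneg (|t| ^ 3)]
  · nlinarith [sq_nonneg (sin t)]

lemma four_div_sq_mul_sin_sq_le_sq (h x : ℝ) : 4 / h ^ 2 * sin (x * h / 2) ^ 2 ≤ x ^ 2 :=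
  calc 4 / h ^ 2 * sin (x * h / 2) ^ 2 ≤ 4 / h ^ 2 * (x * h / 2) ^ 2 :=
        mul_le_mul_of_nonneg_left sin_sq_le_sq (by positivity)
    _ = x ^ 2 * (h ^ 2 / h ^ 2) := by ring
    _ ≤ x ^ 2 := mul_le_of_le_one_right (sq_nonneg x) (div_self_le_one _)

lemma sq_sub_le_four_div_sq_mul_sin_sq {h : ℝ} (hh : h ≠ 0) (x : ℝ) :
    x ^ 2 - h ^ 2 * x ^ 4 / 12 ≤ 4 / h ^ 2 * sin (x * h / 2) ^ 2 :=
  calc x ^ 2 - h ^ 2 * x ^ 4 / 12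
      = 4 / h ^ 2 * ((x * h / 2) ^ 2 - (x * h / 2) ^ 4 / 3) := by field_simp; ring
    _ ≤ 4 / h ^ 2 * sin (x * h / 2) ^ 2 := by
        gcongr; exact sq_sub_pow_four_div_three_le_sin_sq _

lemma Mh_nonneg {d : ℕ} (h : ℝ) (ξ : Ed d) : 0 ≤ Mh h ξ := by
  unfold Mh; positivity

lemma Mh_le_norm_sq {d : ℕ} (h : ℝ) (ξ : Ed d) : Mh h ξ ≤ ‖ξ‖ ^ 2 := by
  rw [EuclideanSpace.real_norm_sq_eq]
  exact Finset.sum_le_sum fun p _ => four_div_sq_mul_sin_sq_le_sq h (ξ p)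

lemma norm_sq_sub_le_Mh {d : ℕ} {h : ℝ} (hh : h ≠ 0) (ξ : Ed d) :
    ‖ξ‖ ^ 2 - h ^ 2 * (‖ξ‖ ^ 2) ^ 2 / 12 ≤ Mh h ξ := by
  have hfourth : ∑ p, (ξ p ^ 2) ^ 2 ≤ (‖ξ‖ ^ 2) ^ 2 := by
    rw [EuclideanSpace.real_norm_sq_eq]
    exact Finset.sum_sq_le_sq_sum_of_nonneg fun p _ => sq_nonneg (ξ p)
  have hcoord : ∑ p, (ξ p ^ 2 - h ^ 2 * (ξ p ^ 2) ^ 2 / 12) ≤ Mh h ξ :=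
    Finset.sum_le_sum fun p _ => by
      rw [← pow_mul]; exact sq_sub_le_four_div_sq_mul_sin_sq hh (ξ p)
  rw [Finset.sum_sub_distrib, ← Finset.sum_div, ← Finset.mul_sum,
    ← EuclideanSpace.real_norm_sq_eq] at hcoord
  nlinarith [sq_nonneg h]

lemma abs_rpow_sub_rpow_le {a b s : ℝ} (ha : 0 ≤ a) (hab : a ≤ b) (hs : 0 ≤ s) (hs1 : s ≤ 1) :
    |a ^ s - b ^ s| ≤ b ^ (s - 1) * (b - a) := by
  rcases hab.eq_or_lt with rfl | hlt
  · simp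
  have hb : 0 < b := ha.trans_lt hlt
  have hratio : a / b ≤ (a / b) ^ s := by
    simpa using rpow_le_rpow_of_exponent_ge' (div_nonneg ha hb.le)
      ((div_le_one hb).2 hab) hs hs1
  have hsplit : b ^ s * (a / b) = b ^ (s - 1) * a := by
    rw [rpow_sub_one hb.ne']; ring
  calc |a ^ s - b ^ s| = b ^ s - b ^ s * (a / b) ^ s := by
        rw [div_rpow ha hb.le, mul_div_cancel₀ _ (rpow_pos_of_pos hb s).ne',
          abs_sub_comm, abs_of_nonneg (sub_nonneg.2 (rpow_le_rpow ha hab hs))]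
    _ ≤ b ^ s - b ^ s * (a / b) := by gcongr
    _ = b ^ (s - 1) * (b - a) := by
        rw [hsplit, mul_sub, rpow_sub_one hb.ne']; field_simp

theorem stmt6_general {d : ℕ} :
    ∃ c : ℝ, 0 < c ∧
      ∀ α : ℝ, 0 < α → α < 2 → ∀ h : ℝ, 0 < h → ∀ ξ : Ed d,
        (∀ p, |ξ p| ≤ Real.pi / h) →
        |Mh h ξ ^ (α / 2) - ‖ξ‖ ^ α| ≤ c * h ^ 2 * ‖ξ‖ ^ (α + 2) := by
  refine ⟨1 / 12, by norm_num, fun α hα hα2 h hh ξ _ => ?_⟩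
  have hN := norm_nonneg ξ
  have hsq : ∀ s : ℝ, (‖ξ‖ ^ 2) ^ (s / 2) = ‖ξ‖ ^ s := fun s => by
    rw [← rpow_natCast_mul hN]; push_cast; ring_nf
  calc |Mh h ξ ^ (α / 2) - ‖ξ‖ ^ α|
      = |Mh h ξ ^ (α / 2) - (‖ξ‖ ^ 2) ^ (α / 2)| := by rw [hsq]
    _ ≤ (‖ξ‖ ^ 2) ^ (α / 2 - 1) * (‖ξ‖ ^ 2 - Mh h ξ) :=
        abs_rpow_sub_rpow_le (Mh_nonneg h ξ) (Mh_le_norm_sq h ξ) (by linarith) (by linarith)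
    _ ≤ (‖ξ‖ ^ 2) ^ (α / 2 - 1) * (h ^ 2 * (‖ξ‖ ^ 2) ^ 2 / 12) := by
        gcongr; linarith [norm_sq_sub_le_Mh hh.ne' ξ]
    _ = 1 / 12 * h ^ 2 * ((‖ξ‖ ^ 2) ^ (α / 2 - 1) * (‖ξ‖ ^ 2) ^ (2 : ℝ)) := by
        rw [rpow_two]; ring
    _ = 1 / 12 * h ^ 2 * ‖ξ‖ ^ (α + 2) := by
        rw [← rpow_add' (by positivity) (by linarith), ← hsq]; ring_nf

/-- There is a constant `c` depending only on `d` such that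
`|M_h(ξ)^{α/2} - |ξ|^α| ≤ c h² |ξ|^{α+2}` for all `α ∈ (0,2)`, `h > 0` and
`ξ ∈ D_h = [-π/h,π/h]^d`. -/
theorem stmt6 {d : ℕ} (hd : 1 ≤ d) :
    ∃ c : ℝ, 0 < c ∧
      ∀ α : ℝ, 0 < α → α < 2 → ∀ h : ℝ, 0 < h → ∀ ξ : Ed d,
        (∀ p, |ξ p| ≤ Real.pi / h) →
        |Mh h ξ ^ (α / 2) - ‖ξ‖ ^ α| ≤ c * h ^ 2 * ‖ξ‖ ^ (α + 2) :=
  stmt6_general
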